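/- Let E_0 be the eventual-agreement equivalence relation on 2^ℕ, and for distinct x, y ∈ 2^ℕ with x E_0 y let δ(x, y) = min{n : x(m) = y(m) for all m ≥ n} and c({x, y}) = 1 if Σ_{i<δ(x,y)} x(i) + Σ_{i<δ(x,y)} y(i) is even, c({x, y}) = 2 otherwise. Define the relation F on 2^ℕ by x F y if and only if x = y or c({x, y}) = 1. Then F is an equivalence relation refining E_0, and every E_0-class is the union of exactly two F-classes. -/

import Mathlib

open Classical

noncomputable section

/-- `Y` is a complete section for `E`: it meets every `E`-class. -/
def IsCompleteSection {X : Type*} (E : X → X → Prop) (Y : Set X) : Prop :=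
  ∀ x : X, ∃ y ∈ Y, E x y

/-- `Y` is an infinite complete section for `E`: it meets every `E`-class in an infinite set. -/
def IsInfiniteCompleteSection {X : Type*} (E : X → X → Prop) (Y : Set X) : Prop :=
  ∀ x : X, {y | y ∈ Y ∧ E x y}.Infinite

/-- A coloring `c` of the `n`-element subsets of single `E`-classes (encoded as a function on
finsets) is `E`-monochromatic on `Y`: for every `x` there is a color `a` such that every
`n`-element subset of `Y` contained in `[x]_E` gets color `a`. -/
def IsMonochromatic {X : Type*} (E : X → X → Prop) (n : ℕ) {k : ℕ}
    (c : Finset X → Fin k) (Y : Set X) : Prop :=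
  ∀ x : X, ∃ a : Fin k, ∀ A : Finset X, A.card = n → ↑A ⊆ Y → (∀ y ∈ A, E x y) → c A = a

/-- `c` is a Borel coloring of dimension `n`: the induced map on `n`-tuples is measurable. -/
def IsBorelColoring {X : Type*} [MeasurableSpace X] (n : ℕ) {k : ℕ}
    (c : Finset X → Fin k) : Prop :=
  Measurable fun v : Fin n → X => c (Set.finite_range v).toFinset

/-- The strong Borel Ramsey property `E →_B (E)^n_k`: every Borel `E`-coloring of dimension
`n` by `k` colors admits a Borel `E`-monochromatic infinite complete section. -/
def StrongBorelRamsey {X : Type*} [MeasurableSpace X] (E : X → X → Prop) (n k : ℕ) : Prop :=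
  ∀ c : Finset X → Fin k, IsBorelColoring n c →
    ∃ Y : Set X, MeasurableSet Y ∧ IsInfiniteCompleteSection E Y ∧ IsMonochromatic E n c Y

/-- The weak Borel Ramsey property `E →*_B (E)^n_k`: every Borel `E`-coloring of dimension
`n` by `k` colors admits a Borel `E`-monochromatic complete section. -/
def WeakBorelRamsey {X : Type*} [MeasurableSpace X] (E : X → X → Prop) (n k : ℕ) : Prop :=
  ∀ c : Finset X → Fin k, IsBorelColoring n c →
    ∃ Y : Set X, MeasurableSet Y ∧ IsCompleteSection E Y ∧ IsMonochromatic E n c Y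

/-- `E` is smooth: Borel reducible to equality on a standard Borel space. -/
def IsSmooth {X : Type*} [MeasurableSpace X] (E : X → X → Prop) : Prop :=
  ∃ (Z : Type) (mZ : MeasurableSpace Z), @StandardBorelSpace Z mZ ∧
    ∃ f : X → Z, @Measurable X Z _ mZ f ∧ ∀ x y : X, E x y ↔ f x = f y

/-- The eventual agreement relation `E₀` on Cantor space `2^ℕ`. -/
def E0 (x y : ℕ → Bool) : Prop := ∃ n : ℕ, ∀ m ≥ n, x m = y m

/-- `Σ_{i<δ(x,y)} x i + Σ_{i<δ(x,y)} y i`, where `δ(x,y)` is the least `n` with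
`x m = y m` for all `m ≥ n`; junk value `0` if `x` and `y` are not `E₀`-related. -/
def colorSum (x y : ℕ → Bool) : ℕ :=
  if h : ∃ n : ℕ, ∀ m ≥ n, x m = y m then
    ((Finset.range (Nat.find h)).sum fun i => (x i).toNat) +
    ((Finset.range (Nat.find h)).sum fun i => (y i).toNat)
  else 0

/-- The coloring `c` of the paper: a pair `{x,y}` of distinct `E₀`-related points gets color
`0` (representing color `1`) if `colorSum x y` is even, and color `1` (representing color `2`)
otherwise. -/
def c0 : Finset (ℕ → Bool) → Fin 2 := fun A =>
  if ∃ x y : ℕ → Bool, x ≠ y ∧ A = {x, y} ∧ E0 x y ∧ Even (colorSum x y) then 0 else 1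

/-- The subrelation `F` of `E₀`: `x F y` iff `x = y` or `c ({x,y}) = 1` (even `colorSum`). -/
def F0 (x y : ℕ → Bool) : Prop := x = y ∨ (E0 x y ∧ Even (colorSum x y))

/-- The map flipping coordinate `0`. -/
def flip0 (x : ℕ → Bool) : ℕ → Bool := fun n => if n = 0 then !(x 0) else x n

/-- Eventual agreement of `X`-valued sequences: the relation `E₀(X)` on `X^ℕ`
(denoted `E₁` when `X` is uncountable). -/
def E1rel {X : Type*} (u v : ℕ → X) : Prop := ∃ N : ℕ, ∀ j ≥ N, u j = v j

/-- `S` is a monochromatic reduction to `E₁` for the coloring `c` of dimension `n`: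
each `S x` is injective, its range is a monochromatic subset of `[x]_E`, and
`x E y ↔ S x E₁ S y`. -/
def IsMonochromaticReduction {X : Type*} (E : X → X → Prop) (n : ℕ) {k : ℕ}
    (c : Finset X → Fin k) (S : X → ℕ → X) : Prop :=
  (∀ x : X, Function.Injective (S x)) ∧
  (∀ x : X, (∀ i : ℕ, E x (S x i)) ∧
    ∃ a : Fin k, ∀ A : Finset X, A.card = n → ↑A ⊆ Set.range (S x) → c A = a) ∧
  (∀ x y : X, E x y ↔ E1rel (S x) (S y))

/-- `c` is an almost transitive coloring of dimension `n` for `E`: for every `m ≥ n`, every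
`A ∈ [X]^m_E` and all `(n-1)`-element subsets `B₁, B₂ ⊆ A`, one has
`c ({z} ∪ B₁) = c ({z} ∪ B₂)` for all but finitely many `z` in the `E`-saturation of `A`
outside `B₁ ∪ B₂`. -/
def AlmostTransitive {X : Type*} (E : X → X → Prop) (n : ℕ) {k : ℕ}
    (c : Finset X → Fin k) : Prop :=
  ∀ m : ℕ, n ≤ m → ∀ A : Finset X, A.card = m → (∀ x ∈ A, ∀ y ∈ A, E x y) →
    ∀ B₁ B₂ : Finset X, B₁ ⊆ A → B₂ ⊆ A → B₁.card = n - 1 → B₂.card = n - 1 →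
      {z : X | (∃ a ∈ A, E a z) ∧ z ∉ B₁ ∪ B₂ ∧ c (insert z B₁) ≠ c (insert z B₂)}.Finite

/-!
For `E₀`-related `x, y` that agree from `n` on, the parity of `colorSum x y` is the parity of
`Σ_{i<n} x i + Σ_{i<n} y i` for *every* such `n`, since the two tails beyond `δ(x,y)` cancel.
Hence `x F y` says exactly that the prefix sums of `x` and `y` eventually have the same parity,
which is visibly an equivalence relation of index at most two inside each `E₀`-class; flipping
the first bit of `x` changes that parity, so the index is exactly two.
-/

lemma Finset.sum_range_add_sum_range_of_eqOn_Ico {M : Type*} [AddCommMonoid M] {f g : ℕ → M}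
    {d n : ℕ} (hdn : d ≤ n) (hfg : ∀ i ∈ Finset.Ico d n, f i = g i) :
    ∑ i ∈ Finset.range n, f i + ∑ i ∈ Finset.range d, g i =
      ∑ i ∈ Finset.range d, f i + ∑ i ∈ Finset.range n, g i := by
  rw [← Finset.sum_range_add_sum_Ico f hdn, ← Finset.sum_range_add_sum_Ico g hdn,
    Finset.sum_congr rfl hfg]
  ac_rfl

def bitCount (x : ℕ → Bool) (n : ℕ) : ℕ := ∑ i ∈ Finset.range n, (x i).toNat

lemma E0_iff_eventuallyEq {x y : ℕ → Bool} : E0 x y ↔ x =ᶠ[Filter.atTop] y :=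
  Filter.eventually_atTop.symm

lemma E0_equivalence : Equivalence E0 where
  refl x := E0_iff_eventuallyEq.2 (Filter.EventuallyEq.refl _ x)
  symm h := E0_iff_eventuallyEq.2 (E0_iff_eventuallyEq.1 h).symm
  trans h₁ h₂ :=
    E0_iff_eventuallyEq.2 ((E0_iff_eventuallyEq.1 h₁).trans (E0_iff_eventuallyEq.1 h₂))

lemma even_colorSum_iff {x y : ℕ → Bool} {n : ℕ} (hn : ∀ m ≥ n, x m = y m) :
    Even (colorSum x y) ↔ (Even (bitCount x n) ↔ Even (bitCount y n)) := by
  have hE : ∃ n, ∀ m ≥ n, x m = y m := ⟨n, hn⟩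
  have hcancel := Finset.sum_range_add_sum_range_of_eqOn_Ico (Nat.find_le hn)
    fun i hi => congrArg Bool.toNat (Nat.find_spec hE i (Finset.mem_Ico.1 hi).1)
  rw [colorSum, dif_pos hE, ← Nat.even_add, bitCount, bitCount, Nat.even_iff, Nat.even_iff]
  omega

lemma F0_iff {x y : ℕ → Bool} {n : ℕ} (hn : ∀ m ≥ n, x m = y m) :
    F0 x y ↔ (Even (bitCount x n) ↔ Even (bitCount y n)) := by
  refine ⟨?_, fun h => Or.inr ⟨⟨n, hn⟩, (even_colorSum_iff hn).2 h⟩⟩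
  rintro (rfl | ⟨-, hc⟩)
  · exact Iff.rfl
  · exact (even_colorSum_iff hn).1 hc

lemma E0_of_F0 {x y : ℕ → Bool} (h : F0 x y) : E0 x y :=
  h.elim (fun hxy => hxy ▸ E0_equivalence.refl x) And.left

lemma F0_equivalence : Equivalence F0 where
  refl _ := Or.inl rfl
  symm {x y} h := by
    obtain ⟨n, hn⟩ := E0_of_F0 h
    rw [F0_iff hn] at h
    exact (F0_iff fun m hm => (hn m hm).symm).2 h.symm
  trans {x y z} hxy hyz := by
    obtain ⟨n, hn⟩ := Filter.eventually_atTop.1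
      ((E0_iff_eventuallyEq.1 (E0_of_F0 hxy)).and (E0_iff_eventuallyEq.1 (E0_of_F0 hyz)))
    rw [F0_iff fun m hm => (hn m hm).1] at hxy
    rw [F0_iff fun m hm => (hn m hm).2] at hyz
    exact (F0_iff fun m hm => (hn m hm).1.trans (hn m hm).2).2 (hxy.trans hyz)

lemma F0_or_F0_of_not_F0 {u v y : ℕ → Bool} (huv : E0 u v) (huy : E0 u y) (h : ¬F0 u v) :
    F0 u y ∨ F0 v y := by
  obtain ⟨n, hn⟩ := Filter.eventually_atTop.1
    ((E0_iff_eventuallyEq.1 huv).and (E0_iff_eventuallyEq.1 huy))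
  rw [F0_iff fun m hm => (hn m hm).1] at h
  rw [F0_iff fun m hm => (hn m hm).2, F0_iff fun m hm => (hn m hm).1.symm.trans (hn m hm).2]
  tauto

lemma flip0_eq_of_pos (x : ℕ → Bool) {m : ℕ} (hm : 1 ≤ m) : x m = flip0 x m := by
  simp [flip0, Nat.one_le_iff_ne_zero.1 hm]

lemma E0_flip0 (x : ℕ → Bool) : E0 x (flip0 x) := ⟨1, fun _ => flip0_eq_of_pos x⟩

lemma not_F0_flip0 (x : ℕ → Bool) : ¬F0 x (flip0 x) := by
  rw [F0_iff fun _ => flip0_eq_of_pos x]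
  cases hx : x 0 <;> simp [bitCount, flip0, hx]

/-- `F0` is an equivalence relation refining `E₀`, and every `E₀`-class is the union of
exactly two `F0`-classes. -/
theorem F0_equivalence_two_classes :
    Equivalence F0 ∧ (∀ x y : ℕ → Bool, F0 x y → E0 x y) ∧
    ∀ x : ℕ → Bool, ∃ u v : ℕ → Bool, ¬ F0 u v ∧
      {y | E0 x y} = {y | F0 u y} ∪ {y | F0 v y} := by
  refine ⟨F0_equivalence, fun _ _ => E0_of_F0, fun x => ⟨x, flip0 x, not_F0_flip0 x, ?_⟩⟩
  ext y
  refine ⟨fun hy => F0_or_F0_of_not_F0 (E0_flip0 x) hy (not_F0_flip0 x), ?_⟩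
  rintro (hy | hy)
  · exact E0_of_F0 hy
  · exact E0_equivalence.trans (E0_flip0 x) (E0_of_F0 hy)
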